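/- arXiv:2402.02646 — 9 statements merged into one kernel-verified Lean document; each statement's English description precedes it below -/
import Mathlib

section
/- For every n ≥ 3, the polynomial P_n defined by the recursion P_3 = 1, P_n(t) = P_{n-1}(t)·(1+t) + t·∑_{i=3}^{n-2} C(n-2, i-1)·P_i(t)·P_{n+1-i}(t) has degree n - 3. -/
/-!
By strong induction every `P n` is monic of degree `n - 3`. In the recursion, `P (n-1) * (1 + X)`
is monic of degree `n - 3`, while each summand `P i * P (n+1-i)` has degree `n - 5`, so the term
`X * ∑ …` has degree at most `n - 4` and cannot disturb the leading coefficient.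
-/

open Polynomial Finset

namespace Polynomial

variable {R : Type*} [Semiring R]

theorem monic_one_add_X : (1 + X : R[X]).Monic := by
  simpa [add_comm] using monic_X_add_C (1 : R)

theorem Monic.mul_one_add_X_add_X_mul [Nontrivial R] {p q : R[X]} (hp : p.Monic)
    (hq : q.degree < p.degree) :
    (p * (1 + X) + X * q).Monic ∧ (p * (1 + X) + X * q).natDegree = p.natDegree + 1 := by
  have hlt : (X * q).degree < (p * (1 + X)).degree := by
    rw [X_mul, degree_mul_X, monic_one_add_X.degree_mul, add_comm (1 : R[X]), ← C_1,
      degree_X_add_C]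
    exact WithBot.add_lt_add_right WithBot.one_ne_bot hq
  refine ⟨(hp.mul monic_one_add_X).add_of_left hlt, ?_⟩
  rw [natDegree_add_eq_left_of_degree_lt hlt, hp.natDegree_mul monic_one_add_X,
    add_comm (1 : R[X]), ← C_1, natDegree_X_add_C]

theorem degree_sum_choose_mul_lt {P : ℕ → R[X]} {n : ℕ}
    (hP : ∀ i, 3 ≤ i → i < n → (P i).natDegree ≤ i - 3) :
    (∑ i ∈ Icc 3 (n - 2), ((n - 2).choose (i - 1) : R[X]) * P i * P (n + 1 - i)).degree
      < (n - 4 : ℕ) := by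
  refine (degree_sum_le _ _).trans_lt ((Finset.sup_lt_iff (WithBot.bot_lt_coe _)).2 ?_)
  intro i hi
  rw [mem_Icc] at hi
  refine degree_le_natDegree.trans_lt (WithBot.coe_lt_coe.2 ?_)
  calc (((n - 2).choose (i - 1) : R[X]) * P i * P (n + 1 - i)).natDegree
      ≤ (P i).natDegree + (P (n + 1 - i)).natDegree := by
        refine natDegree_mul_le.trans (add_le_add_left ?_ _)
        refine natDegree_mul_le.trans ?_
        rw [natDegree_natCast, zero_add]
    _ ≤ (i - 3) + (n + 1 - i - 3) := add_le_add (hP i hi.1 (by omega)) (hP _ (by omega) (by omega))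
    _ < n - 4 := by omega

end Polynomial

theorem stmt1 (P : ℕ → Polynomial ℤ)
    (h3 : P 3 = 1)
    (hrec : ∀ n, 3 < n → P n = P (n-1) * (1 + X) +
      X * ∑ i ∈ Finset.Icc 3 (n-2), ((n-2).choose (i-1) : Polynomial ℤ) * P i * P (n+1-i)) :
    ∀ n, 3 ≤ n → (P n).natDegree = n - 3 := by
  suffices h : ∀ n, 3 ≤ n → (P n).Monic ∧ (P n).natDegree = n - 3 from fun n hn => (h n hn).2
  intro n
  induction n using Nat.strong_induction_on with
  | _ n ih =>
    intro hn
    rcases hn.eq_or_lt with rfl | hn4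
    · simp [h3]
    obtain ⟨hmonic, hdeg⟩ := ih (n - 1) (by omega) (by omega)
    have hsum := degree_sum_choose_mul_lt (P := P) (n := n) fun i hi hin => (ih i hin hi).2.le
    rw [show n - 4 = n - 1 - 3 by omega, ← hdeg, ← degree_eq_natDegree hmonic.ne_zero] at hsum
    rw [hrec n hn4]
    obtain ⟨hmonic', hdeg'⟩ := hmonic.mul_one_add_X_add_X_mul hsum
    exact ⟨hmonic', by omega⟩
end

section
/- For every n ≥ 3, the polynomial P_n defined by the recursion P_3 = 1, P_n(t) = P_{n-1}(t)·(1+t) + t·∑_{i=3}^{n-2} C(n-2, i-1)·P_i(t)·P_{n+1-i}(t) is palindromic: its coefficient of t^i equals its coefficient of t^{n-3-i} for all 0 ≤ i ≤ n-3. -/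
/-!
A polynomial `p` of degree at most `d` is palindromic with respect to `d` exactly when
`reflect d p = p`. Since `reflect` is additive and `reflect (d + e) (p * q) = reflect d p * reflect e q`
for `deg p ≤ d`, `deg q ≤ e`, palindromic polynomials are closed under sums of a common center and
under products, with the centers adding up. In the recursion, `P (n-1) * (1 + X)` and every
summand `X * binom * P i * P (n+1-i)` are then palindromic with the same center `n - 3`.
-/

open Polynomial Finset

namespace Polynomial

variable {R : Type*} [Semiring R]

def IsPalindromic (d : ℕ) (p : R[X]) : Prop :=
  p.natDegree ≤ d ∧ p.reflect d = p

namespace IsPalindromic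

variable {d e : ℕ} {p q : R[X]}

theorem zero : IsPalindromic d (0 : R[X]) :=
  ⟨by simp, reflect_zero⟩

theorem add (hp : IsPalindromic d p) (hq : IsPalindromic d q) : IsPalindromic d (p + q) :=
  ⟨natDegree_add_le_of_degree_le hp.1 hq.1, by rw [reflect_add, hp.2, hq.2]⟩

theorem sum {ι : Type*} {s : Finset ι} {f : ι → R[X]} (hf : ∀ i ∈ s, IsPalindromic d (f i)) :
    IsPalindromic d (∑ i ∈ s, f i) := by
  induction s using Finset.cons_induction with
  | empty => exact zero
  | cons a s ha ih =>
    rw [sum_cons]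
    exact (hf a (mem_cons_self a s)).add (ih fun i hi => hf i (mem_cons_of_mem hi))

theorem mul (hp : IsPalindromic d p) (hq : IsPalindromic e q) : IsPalindromic (d + e) (p * q) :=
  ⟨natDegree_mul_le_of_le hp.1 hq.1, by rw [reflect_mul p q hp.1 hq.1, hp.2, hq.2]⟩

theorem coeff_eq (hp : IsPalindromic d p) {i : ℕ} (hi : i ≤ d) : p.coeff i = p.coeff (d - i) := by
  rw [← hp.2, coeff_reflect, revAt_le hi, hp.2]

end IsPalindromic

theorem isPalindromic_one : IsPalindromic 0 (1 : R[X]) :=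
  ⟨by simp, by simp⟩

theorem isPalindromic_natCast (k : ℕ) : IsPalindromic 0 (k : R[X]) :=
  ⟨by simp, by rw [← C_eq_natCast, reflect_C, pow_zero, mul_one]⟩

theorem isPalindromic_X : IsPalindromic 2 (X : R[X]) :=
  ⟨natDegree_X_le.trans (by norm_num), by
    rw [← pow_one X, reflect_monomial, revAt_le (by norm_num)]⟩

theorem isPalindromic_one_add_X : IsPalindromic 1 (1 + X : R[X]) :=
  ⟨natDegree_add_le_of_degree_le (by simp) natDegree_X_le, by simp [add_comm]⟩

end Polynomial

theorem stmt2 (P : ℕ → Polynomial ℤ)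
    (h3 : P 3 = 1)
    (hrec : ∀ n, 3 < n → P n = P (n-1) * (1 + X) +
      X * ∑ i ∈ Finset.Icc 3 (n-2), ((n-2).choose (i-1) : Polynomial ℤ) * P i * P (n+1-i)) :
    ∀ n, 3 ≤ n → ∀ i ≤ n - 3, (P n).coeff i = (P n).coeff (n - 3 - i) := by
  have hpal : ∀ n, 3 ≤ n → IsPalindromic (n - 3) (P n) := by
    intro n
    induction n using Nat.strong_induction_on with
    | _ n ih =>
      intro hn
      obtain rfl | hn := hn.eq_or_lt
      · simpa [h3] using isPalindromic_one
      rw [hrec n hn, mul_sum]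
      refine .add ?_ (.sum fun i hi => ?_)
      · convert (ih (n - 1) (by omega) (by omega)).mul isPalindromic_one_add_X using 1
        omega
      · obtain ⟨hi3, hin⟩ := mem_Icc.1 hi
        convert isPalindromic_X.mul (((isPalindromic_natCast _).mul (ih i (by omega) hi3)).mul
          (ih (n + 1 - i) (by omega) (by omega))) using 1
        omega
  exact fun n hn i hi => (hpal n hn).coeff_eq hi
end

section
/- Let f(t) ∈ ℤ[t] be a symmetric polynomial with center d/2, i.e. the coefficient of t^i in f equals the coefficient of t^{d-i} for all i, and deg f ≤ d. Then there exist unique integers γ_0, …, γ_{⌊d/2⌋} such that f(t) = ∑_{i=0}^{⌊d/2⌋} γ_i · t^i · (1+t)^{d-2i}. -/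
/-!
`(1 + t) ^ d` is symmetric with center `d / 2` and has constant term `1`, so `f - f(0) (1 + t) ^ d`
is symmetric with center `d / 2` and vanishing coefficients at `t ^ 0` and `t ^ d`; dividing it by
`t` gives a symmetric polynomial with center `(d - 2) / 2`. Since
`t · t ^ i (1 + t) ^ (d - 2 - 2i) = t ^ (i + 1) (1 + t) ^ (d - 2(i + 1))`, induction on `d` in steps
of two produces the expansion, with `γ₀ = f(0)`. Comparing constant terms and cancelling `t`
gives uniqueness along the same induction.
-/

open Polynomial Finset

namespace Polynomial

section

variable {R : Type*} [CommRing R]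

noncomputable def gammaPoly (d : ℕ) (γ : ℕ → R) : R[X] :=
  ∑ i ∈ range (d / 2 + 1), C (γ i) * X ^ i * (1 + X) ^ (d - 2 * i)

theorem gammaPoly_add_two (d : ℕ) (γ : ℕ → R) :
    gammaPoly (d + 2) γ = C (γ 0) * (1 + X) ^ (d + 2) + X * gammaPoly d (fun i => γ (i + 1)) := by
  rw [gammaPoly, gammaPoly, show (d + 2) / 2 = d / 2 + 1 by omega, sum_range_succ', mul_sum,
    add_comm]
  congr 1
  · simp
  · refine sum_congr rfl fun i _ => ?_
    rw [show d + 2 - 2 * (i + 1) = d - 2 * i by omega]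
    ring

theorem gammaPoly_of_lt_two {d : ℕ} (hd : d < 2) (γ : ℕ → R) :
    gammaPoly d γ = C (γ 0) * (1 + X) ^ d := by
  simp [gammaPoly, Nat.div_eq_of_lt hd]

@[simp]
theorem coeff_zero_gammaPoly (d : ℕ) (γ : ℕ → R) : (gammaPoly d γ).coeff 0 = γ 0 := by
  rw [coeff_zero_eq_eval_zero, gammaPoly, eval_finsetSum, sum_eq_single 0]
  · simp
  · intro i _ hi
    simp [zero_pow hi]
  · simp

theorem eq_of_gammaPoly_eq {d : ℕ} {γ δ : ℕ → R} (hγ : ∀ i, d / 2 < i → γ i = 0)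
    (hδ : ∀ i, d / 2 < i → δ i = 0) (h : gammaPoly d γ = gammaPoly d δ) : γ = δ := by
  induction d using Nat.strong_induction_on generalizing γ δ with
  | _ d ih =>
  funext i
  rcases i with _ | i
  · simpa using congr_arg (coeff · 0) h
  rcases d with _ | _ | d
  · simp [hγ, hδ]
  · simp [hγ, hδ]
  have h0 : γ 0 = δ 0 := by simpa using congr_arg (coeff · 0) h
  rw [gammaPoly_add_two, gammaPoly_add_two, h0, add_right_inj] at h
  have htail := ih d (by omega) (fun j hj => hγ (j + 1) (by omega))
    (fun j hj => hδ (j + 1) (by omega)) (isRegular_X.left h)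
  exact congr_fun htail i

noncomputable def gammaPeel (d : ℕ) (f : R[X]) : R[X] :=
  divX (f - C (f.coeff 0) * (1 + X) ^ d)

theorem eq_add_X_mul_gammaPeel (d : ℕ) (f : R[X]) :
    f = C (f.coeff 0) * (1 + X) ^ d + X * gammaPeel d f := by
  have h := X_mul_divX_add (f - C (f.coeff 0) * (1 + X) ^ d)
  simp only [coeff_sub, coeff_C_mul, coeff_one_add_X_pow, Nat.choose_zero_right, Nat.cast_one,
    mul_one, sub_self, map_zero, add_zero] at h
  rw [gammaPeel, h]
  ring

theorem coeff_gammaPeel (d : ℕ) (f : R[X]) (j : ℕ) :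
    (gammaPeel d f).coeff j = f.coeff (j + 1) - f.coeff 0 * (d.choose (j + 1) : R) := by
  simp [gammaPeel, coeff_divX, coeff_one_add_X_pow]

theorem natDegree_gammaPeel_le {d : ℕ} {f : R[X]} (hdeg : f.natDegree ≤ d + 2)
    (hsym : f.coeff (d + 2) = f.coeff 0) : (gammaPeel (d + 2) f).natDegree ≤ d := by
  refine natDegree_le_iff_coeff_eq_zero.mpr fun j hj => ?_
  rw [coeff_gammaPeel]
  rcases (show j + 1 = d + 2 ∨ d + 2 < j + 1 by omega) with hj | hj
  · simp [hj, hsym]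
  · rw [coeff_eq_zero_of_natDegree_lt (hdeg.trans_lt hj), Nat.choose_eq_zero_of_lt hj]
    simp

theorem coeff_gammaPeel_symm {d : ℕ} {f : R[X]}
    (hsym : ∀ i ≤ d + 2, f.coeff i = f.coeff (d + 2 - i)) {i : ℕ} (hi : i ≤ d) :
    (gammaPeel (d + 2) f).coeff i = (gammaPeel (d + 2) f).coeff (d - i) := by
  rw [coeff_gammaPeel, coeff_gammaPeel, hsym (i + 1) (by omega),
    Nat.choose_symm_of_eq_add (by omega : d + 2 = i + 1 + (d - i + 1))]
  congr 2
  omega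

theorem exists_eq_gammaPoly {d : ℕ} {f : R[X]} (hdeg : f.natDegree ≤ d)
    (hsym : ∀ i ≤ d, f.coeff i = f.coeff (d - i)) :
    ∃ γ : ℕ → R, (∀ i, d / 2 < i → γ i = 0) ∧ f = gammaPoly d γ := by
  induction d using Nat.strong_induction_on generalizing f with
  | _ d ih =>
  rcases d with _ | _ | d
  · refine ⟨Pi.single 0 (f.coeff 0), fun i hi => Pi.single_eq_of_ne (by omega) _, ?_⟩
    rw [gammaPoly_of_lt_two (by omega), eq_C_of_natDegree_eq_zero (Nat.le_zero.mp hdeg)]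
    simp
  · refine ⟨Pi.single 0 (f.coeff 0), fun i hi => Pi.single_eq_of_ne (by omega) _, ?_⟩
    rw [gammaPoly_of_lt_two (by omega)]
    conv_lhs => rw [eq_X_add_C_of_natDegree_le_one hdeg, ← hsym 0 (by omega)]
    simp only [Pi.single_eq_same]
    ring
  obtain ⟨γ, hγ, hpeel⟩ := ih d (by omega)
    (natDegree_gammaPeel_le hdeg (hsym 0 (by omega)).symm)
    (fun i hi => coeff_gammaPeel_symm hsym hi)
  refine ⟨fun | 0 => f.coeff 0 | i + 1 => γ i, fun i hi => ?_, ?_⟩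
  · rcases i with _ | i
    · omega
    · exact hγ i (by omega)
  · rw [gammaPoly_add_two, ← hpeel]
    exact eq_add_X_mul_gammaPeel _ f

end

end Polynomial

theorem stmt4 (f : Polynomial ℤ) (d : ℕ)
    (hdeg : f.natDegree ≤ d)
    (hsym : ∀ i ≤ d, f.coeff i = f.coeff (d - i)) :
    ∃! γ : ℕ → ℤ, (∀ i, d / 2 < i → γ i = 0) ∧
      f = ∑ i ∈ Finset.range (d / 2 + 1), C (γ i) * X ^ i * (1 + X) ^ (d - 2 * i) := by
  obtain ⟨γ, hγ, hf⟩ := exists_eq_gammaPoly hdeg hsym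
  exact ⟨γ, ⟨hγ, hf⟩, fun δ ⟨hδ, hfδ⟩ => eq_of_gammaPoly_eq hδ hγ (hfδ.symm.trans hf)⟩
end

section
/- Define G_n(t) = γ(P_n), the gamma-polynomial of P_n. Then the G_n satisfy the recursion G_3 = 1 and, for n > 3, G_n(t) = G_{n-1}(t) + t·∑_{i=3}^{n-2} C(n-2, i-1)·G_i(t)·G_{n+1-i}(t). -/
open Polynomial Finset

/-!
In a field containing a transcendental `x`, put `u = x / (1 + x) ^ 2`. A γ-expansion of degree `d`
evaluates to `(1 + x) ^ d * γ(u)`, so `P n (x) = (1 + x) ^ (n - 3) * G n (u)`, and dividing the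
recursion for `P n (x)` by `(1 + x) ^ (n - 3)` gives the recursion for `G n (u)`: the factor `x`
becomes `u` and the factor `1 + x` is absorbed by the shift of degree. Finally `u` is again
transcendental, because the polynomials `X ^ i * (1 + X) ^ (2 * (D - i))` are independent (look at
their lowest terms), so `g ↦ g(u)` is injective and the recursion holds for `G n` itself.
-/

namespace Polynomial

variable {R : Type*} [CommRing R]

theorem coeff_eq_zero_of_sum_C_mul_X_pow_mul_one_add_X_pow_eq_zero {m : ℕ} {c : ℕ → R}
    {e : ℕ → ℕ} (h : ∑ i ∈ range m, C (c i) * X ^ i * (1 + X) ^ e i = 0) :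
    ∀ i < m, c i = 0 := by
  induction m generalizing c e with
  | zero => intro i hi; omega
  | succ m ih =>
    rw [sum_range_succ'] at h
    have hsplit : ∑ i ∈ range m, C (c (i + 1)) * X ^ (i + 1) * (1 + X) ^ e (i + 1) =
        X * ∑ i ∈ range m, C (c (i + 1)) * X ^ i * (1 + X) ^ e (i + 1) := by
      rw [mul_sum]; exact sum_congr rfl fun i _ => by ring
    rw [hsplit] at h
    have hc0 : c 0 = 0 := by
      simpa [coeff_one_add_X_pow] using congrArg (coeff · 0) h
    have htail : ∑ i ∈ range m, C (c (i + 1)) * X ^ i * (1 + X) ^ e (i + 1) = 0 := by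
      rw [hc0, C_0, zero_mul, zero_mul, add_zero] at h
      exact isRegular_X.left (h.trans (mul_zero X).symm)
    rintro (_ | i) hi
    · exact hc0
    · exact ih htail i (by omega)

variable {A : Type*} [CommRing A] [Algebra R A] {x u : A}

theorem aeval_sum_C_coeff_mul_X_pow_mul_one_add_X_pow (hu : (1 + x) ^ 2 * u = x) (g : R[X])
    {d : ℕ} (hg : g.natDegree ≤ d / 2) :
    aeval x (∑ i ∈ range (d / 2 + 1), C (g.coeff i) * X ^ i * (1 + X) ^ (d - 2 * i)) =
      (1 + x) ^ d * aeval u g := by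
  rw [aeval_eq_sum_range' (Nat.lt_succ_of_le hg), map_sum, mul_sum]
  refine sum_congr rfl fun i hi => ?_
  have hd : (1 + x) ^ d = (1 + x) ^ (2 * i) * (1 + x) ^ (d - 2 * i) := by
    rw [← pow_add]; congr 1; have := mem_range.1 hi; omega
  have hxi : x ^ i = (1 + x) ^ (2 * i) * u ^ i := by rw [pow_mul, ← mul_pow, hu]
  simp only [map_mul, map_pow, map_add, map_one, aeval_X, aeval_C, Algebra.smul_def]
  rw [hxi, hd]
  ring

end Polynomial

theorem Transcendental.of_one_add_sq_mul_eq {R A : Type*} [CommRing R] [CommRing A] [Algebra R A]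
    {x u : A} (hx : Transcendental R x) (hu : (1 + x) ^ 2 * u = x) : Transcendental R u := by
  refine transcendental_iff.2 fun g hg => ?_
  set D := g.natDegree
  have hdeg : g.natDegree ≤ 2 * D / 2 := by omega
  have hsum := aeval_sum_C_coeff_mul_X_pow_mul_one_add_X_pow hu g hdeg
  rw [hg, mul_zero, Nat.mul_div_cancel_left D two_pos] at hsum
  have hcoeff := coeff_eq_zero_of_sum_C_mul_X_pow_mul_one_add_X_pow_eq_zero
    (transcendental_iff.1 hx _ hsum)
  ext i
  rcases le_or_gt i D with hi | hi
  · exact hcoeff i (by omega)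
  · exact coeff_eq_zero_of_natDegree_lt hi

section BinomConvolution

variable {S T : Type*} [CommSemiring S] [CommSemiring T]

def binomConvolution (f : ℕ → S) (n : ℕ) : S :=
  ∑ i ∈ Icc 3 (n - 2), ((n - 2).choose (i - 1) : S) * f i * f (n + 1 - i)

theorem map_binomConvolution {F : Type*} [FunLike F S T] [RingHomClass F S T] (φ : F)
    (f : ℕ → S) (n : ℕ) : φ (binomConvolution f n) = binomConvolution (φ ∘ f) n := by
  simp [binomConvolution]

end BinomConvolution

section Transfer

variable {A : Type*} [CommRing A] {x u : A} {p q : ℕ → A}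

theorem mul_binomConvolution_eq (hu : (1 + x) ^ 2 * u = x)
    (hpq : ∀ n, 3 ≤ n → p n = (1 + x) ^ (n - 3) * q n) (n : ℕ) :
    x * binomConvolution p n = (1 + x) ^ (n - 3) * (u * binomConvolution q n) := by
  simp only [binomConvolution, mul_sum]
  refine sum_congr rfl fun i hi => ?_
  obtain ⟨hi3, hin⟩ := mem_Icc.1 hi
  have hexp :
      (1 + x) ^ (n - 3) = (1 + x) ^ 2 * ((1 + x) ^ (i - 3) * (1 + x) ^ (n + 1 - i - 3)) := by
    rw [← pow_add, ← pow_add]; congr 1; omega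
  rw [hpq i hi3, hpq (n + 1 - i) (by omega), hexp]
  linear_combination (-((n - 2).choose (i - 1) * q i * q (n + 1 - i) * (1 + x) ^ (i - 3) *
    (1 + x) ^ (n + 1 - i - 3) : A)) * hu

theorem eq_add_mul_binomConvolution_of_recursion [IsDomain A] (hu : (1 + x) ^ 2 * u = x)
    (hx : 1 + x ≠ 0)
    (hpq : ∀ n, 3 ≤ n → p n = (1 + x) ^ (n - 3) * q n) {n : ℕ} (hn : 3 < n)
    (hp : p n = p (n - 1) * (1 + x) + x * binomConvolution p n) :
    q n = q (n - 1) + u * binomConvolution q n := by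
  refine mul_left_cancel₀ (pow_ne_zero (n - 3) hx) ?_
  have hexp : (1 + x) ^ (n - 3) = (1 + x) ^ (n - 1 - 3) * (1 + x) := by
    rw [← pow_succ]; congr 1; omega
  rw [← hpq n hn.le, hp, mul_binomConvolution_eq hu hpq, hpq (n - 1) (by omega), hexp]
  ring

end Transfer

theorem stmt7 (P : ℕ → Polynomial ℤ)
    (h3 : P 3 = 1)
    (hrec : ∀ n, 3 < n → P n = P (n-1) * (1 + X) +
      X * ∑ i ∈ Finset.Icc 3 (n-2), ((n-2).choose (i-1) : Polynomial ℤ) * P i * P (n+1-i))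
    (G : ℕ → Polynomial ℤ)
    (hGdeg : ∀ n, 3 ≤ n → (G n).natDegree ≤ (n - 3) / 2)
    (hG : ∀ n, 3 ≤ n → P n = ∑ i ∈ Finset.range ((n - 3) / 2 + 1),
        C ((G n).coeff i) * X ^ i * (1 + X) ^ (n - 3 - 2 * i)) :
    G 3 = 1 ∧ ∀ n, 3 < n → G n = G (n-1) +
      X * ∑ i ∈ Finset.Icc 3 (n-2), ((n-2).choose (i-1) : Polynomial ℤ) * G i * G (n+1-i) := by
  let x : FractionRing ℤ[X] := algebraMap ℤ[X] _ X
  have hx : Transcendental ℤ x :=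
    (transcendental_algebraMap_iff (IsFractionRing.injective _ _)).2 (transcendental_X ℤ)
  have h1x : 1 + x ≠ 0 := fun h => hx <| by
    rw [show x = algebraMap ℤ _ (-1) by rw [map_neg, map_one]; linear_combination h]
    exact isAlgebraic_algebraMap _
  set u := x / (1 + x) ^ 2
  have hu : (1 + x) ^ 2 * u = x := mul_div_cancel₀ x (pow_ne_zero 2 h1x)
  have hinj := transcendental_iff_injective.1 (hx.of_one_add_sq_mul_eq hu)
  have hPG : ∀ n, 3 ≤ n → aeval x (P n) = (1 + x) ^ (n - 3) * aeval u (G n) :=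
    fun n hn => by
      rw [hG n hn]
      exact aeval_sum_C_coeff_mul_X_pow_mul_one_add_X_pow hu _ (hGdeg n hn)
  refine ⟨hinj ?_, fun n hn => ?_⟩
  · simpa [h3] using (hPG 3 le_rfl).symm
  · have hrecP : P n = P (n - 1) * (1 + X) + X * binomConvolution P n := hrec n hn
    have hp := congrArg (aeval x) hrecP
    simp only [map_add, map_mul, map_one, aeval_X, map_binomConvolution] at hp
    show G n = G (n - 1) + X * binomConvolution G n
    apply hinj
    simp only [map_add, map_mul, aeval_X, map_binomConvolution]
    exact eq_add_mul_binomConvolution_of_recursion hu h1x hPG hn hp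
end

section
/- A real-rooted palindromic polynomial with nonnegative coefficients is γ-positive: if f ∈ ℝ[t] is symmetric with center d/2, has nonnegative coefficients, and has only real roots, then in the unique expansion f(t) = ∑_{i=0}^{⌊d/2⌋} γ_i t^i (1+t)^{d-2i} all γ_i are nonnegative. -/
/-!
The polynomials `∑ γᵢ Xⁱ (1 + X)^(d - 2i)` with all `γᵢ ≥ 0` form a cone, and these cones are
graded-multiplicative, since
`Xⁱ (1 + X)^(d - 2i) · Xʲ (1 + X)^(e - 2j) = Xⁱ⁺ʲ (1 + X)^(d + e - 2(i + j))`.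
Nonnegative coefficients force all real roots to be `≤ 0`, and palindromicity pairs a root `r`
with `r⁻¹`. Hence `f` splits off a factor `X` (when `f(0) = 0`, which also lowers the degree
below `d`), `1 + X`, or `(X - r)(X - r⁻¹) = (1 + X)² + (-(r + r⁻¹) - 2) X` with
`-(r + r⁻¹) ≥ 2`; each lies in the cone of its centre, and the cofactor is again palindromic
with nonpositive roots, so induction on `d` puts `f` in the cone. The expansion is unique
because `Xⁱ (1 + X)^(d - 2i)` has lowest term `Xⁱ`.
-/

open Polynomial Finset

open scoped NNReal

namespace Polynomial

noncomputable def gammaBasis (d i : ℕ) : ℝ[X] := X ^ i * (1 + X) ^ (d - 2 * i)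

noncomputable def gammaCone (d : ℕ) : Submodule ℝ≥0 ℝ[X] :=
  Submodule.span ℝ≥0 (gammaBasis d '' Set.Iic (d / 2))

theorem gammaBasis_mem_gammaCone {d i : ℕ} (hi : i ≤ d / 2) : gammaBasis d i ∈ gammaCone d :=
  Submodule.subset_span ⟨i, hi, rfl⟩

theorem gammaBasis_mul_gammaBasis {d e i j : ℕ} (hi : 2 * i ≤ d) (hj : 2 * j ≤ e) :
    gammaBasis d i * gammaBasis e j = gammaBasis (d + e) (i + j) := by
  rw [gammaBasis, gammaBasis, gammaBasis,
    show d + e - 2 * (i + j) = (d - 2 * i) + (e - 2 * j) by omega]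
  ring

theorem gammaCone_mul_le (d e : ℕ) : gammaCone d * gammaCone e ≤ gammaCone (d + e) := by
  rw [gammaCone, gammaCone, Submodule.span_mul_span]
  refine Submodule.span_le.mpr ?_
  rintro _ ⟨_, ⟨i, hi, rfl⟩, _, ⟨j, hj, rfl⟩, rfl⟩
  rw [Set.mem_Iic] at hi hj
  change gammaBasis d i * gammaBasis e j ∈ gammaCone (d + e)
  rw [gammaBasis_mul_gammaBasis (by omega) (by omega)]
  exact gammaBasis_mem_gammaCone (by omega)

theorem mul_mem_gammaCone {d e : ℕ} {p q : ℝ[X]} (hp : p ∈ gammaCone d) (hq : q ∈ gammaCone e) :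
    p * q ∈ gammaCone (d + e) :=
  gammaCone_mul_le d e (Submodule.mul_mem_mul hp hq)

theorem C_mem_gammaCone_zero {c : ℝ} (hc : 0 ≤ c) : C c ∈ gammaCone 0 := by
  have h : (⟨c, hc⟩ : ℝ≥0) • gammaBasis 0 0 ∈ gammaCone 0 :=
    Submodule.smul_mem _ _ (gammaBasis_mem_gammaCone le_rfl)
  simpa [gammaBasis, Algebra.smul_def] using h

theorem X_mem_gammaCone_two : X ∈ gammaCone 2 := by
  simpa [gammaBasis] using gammaBasis_mem_gammaCone (d := 2) (i := 1) le_rfl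

theorem one_add_X_mem_gammaCone_one : 1 + X ∈ gammaCone 1 := by
  simpa [gammaBasis] using gammaBasis_mem_gammaCone (d := 1) (i := 0) le_rfl

theorem quadratic_mem_gammaCone_two {a : ℝ} (ha : 2 ≤ a) : X ^ 2 + C a * X + 1 ∈ gammaCone 2 := by
  have h : X ^ 2 + C a * X + 1 =
      gammaBasis 2 0 + (⟨a - 2, by linarith⟩ : ℝ≥0) • gammaBasis 2 1 := by
    simp [gammaBasis, smul_eq_C_mul, map_ofNat C]
    ring
  rw [h]
  exact add_mem (gammaBasis_mem_gammaCone (by norm_num))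
    (Submodule.smul_mem _ _ (gammaBasis_mem_gammaCone le_rfl))

theorem X_sub_C_mul_X_sub_C_inv_eq {r : ℝ} (hr : r ≠ 0) :
    (X - C r) * (X - C r⁻¹) = X ^ 2 + C (-(r + r⁻¹)) * X + 1 := by
  have h : C r * C r⁻¹ = (1 : ℝ[X]) := by rw [← C_mul, mul_inv_cancel₀ hr, C_1]
  rw [C_neg, C_add]
  linear_combination h

theorem X_sub_C_mul_X_sub_C_inv_mem_gammaCone {r : ℝ} (hr : r < 0) :
    (X - C r) * (X - C r⁻¹) ∈ gammaCone 2 := by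
  rw [X_sub_C_mul_X_sub_C_inv_eq hr.ne]
  refine quadratic_mem_gammaCone_two ?_
  have := mul_inv_cancel₀ hr.ne
  nlinarith [mul_nonpos_of_nonneg_of_nonpos (sq_nonneg (r + 1)) (inv_nonpos.mpr hr.le)]

theorem exists_gamma_of_mem_gammaCone {d : ℕ} {p : ℝ[X]} (hp : p ∈ gammaCone d) :
    ∃ γ : ℕ → ℝ, (∀ i, 0 ≤ γ i) ∧
      p = ∑ i ∈ range (d / 2 + 1), C (γ i) * X ^ i * (1 + X) ^ (d - 2 * i) := by
  obtain ⟨l, hl, rfl⟩ := (Finsupp.mem_span_image_iff_linearCombination ℝ≥0).mp hp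
  refine ⟨fun i => l i, fun i => (l i).2, ?_⟩
  rw [Finsupp.linearCombination_apply, Finsupp.sum]
  refine (sum_subset (fun i hi => ?_) fun i _ hi => ?_).trans (sum_congr rfl fun i _ => ?_)
  · exact mem_range.mpr (Nat.lt_succ_of_le (hl hi))
  · simp [Finsupp.notMem_support_iff.mp hi]
  · simp [gammaBasis, Algebra.smul_def, mul_assoc]

theorem gamma_eq_zero_of_sum_eq_zero {d : ℕ} {δ : ℕ → ℝ}
    (h : ∑ i ∈ range (d / 2 + 1), C (δ i) * X ^ i * (1 + X) ^ (d - 2 * i) = 0) {i : ℕ}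
    (hi : i ≤ d / 2) : δ i = 0 := by
  induction i using Nat.strong_induction_on with
  | _ i ih =>
  have hcoeff := congrArg (coeff · i) h
  simp only [finsetSum_coeff, coeff_zero, mul_assoc, coeff_C_mul, coeff_X_pow_mul'] at hcoeff
  rwa [sum_eq_single i, if_pos le_rfl, Nat.sub_self, coeff_one_add_X_pow, Nat.choose_zero_right,
    Nat.cast_one, mul_one] at hcoeff
  · intro j _ hji
    rcases lt_or_gt_of_ne hji with hlt | hgt
    · rw [ih j hlt (by omega), zero_mul]
    · rw [if_neg (by omega), mul_zero]
  · exact fun hi' => absurd (mem_range.mpr (by omega)) hi'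

theorem gamma_unique {d : ℕ} {γ γ' : ℕ → ℝ}
    (h : ∑ i ∈ range (d / 2 + 1), C (γ i) * X ^ i * (1 + X) ^ (d - 2 * i) =
      ∑ i ∈ range (d / 2 + 1), C (γ' i) * X ^ i * (1 + X) ^ (d - 2 * i)) {i : ℕ}
    (hi : i ≤ d / 2) : γ i = γ' i := by
  refine sub_eq_zero.mp (gamma_eq_zero_of_sum_eq_zero (δ := γ - γ') ?_ hi)
  simp only [Pi.sub_apply, C_sub, sub_mul, Finset.sum_sub_distrib, h, sub_self]

theorem reflect_eq_self_of_coeff_eq {R : Type*} [Semiring R] {f : R[X]} {d : ℕ}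
    (h : ∀ i ≤ d, f.coeff i = f.coeff (d - i)) : reflect d f = f := by
  ext i
  rw [coeff_reflect]
  rcases le_or_gt i d with hi | hi
  · rw [revAt_le hi, h i hi]
  · rw [revAt_eq_self_of_lt hi]

theorem nonpos_of_mem_roots_of_coeff_nonneg {f : ℝ[X]} (hf : ∀ i, 0 ≤ f.coeff i) {x : ℝ}
    (hx : x ∈ f.roots) : x ≤ 0 := by
  have hf0 : f ≠ 0 := ne_zero_of_mem_roots hx
  by_contra! hpos
  have : 0 < f.eval x := by
    rw [eval_eq_sum_range]
    calc 0 < f.leadingCoeff * x ^ f.natDegree :=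
          mul_pos ((hf _).lt_of_ne (leadingCoeff_ne_zero.mpr hf0).symm) (pow_pos hpos _)
      _ ≤ _ := single_le_sum (f := fun i => f.coeff i * x ^ i)
          (fun i _ => mul_nonneg (hf i) (pow_nonneg hpos.le _)) (self_mem_range_succ _)
  exact this.ne' (isRoot_of_mem_roots hx)

-- Through `f.roots`, which is empty for `f = 0`, the zero polynomial qualifies.
structure IsPalindromicNonposRooted (d : ℕ) (f : ℝ[X]) : Prop where
  natDegree_le : f.natDegree ≤ d
  reflect_eq : reflect d f = f
  splits : f.Splits
  leadingCoeff_nonneg : 0 ≤ f.leadingCoeff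
  nonpos_of_mem_roots : ∀ x ∈ f.roots, x ≤ 0

namespace IsPalindromicNonposRooted

variable {d : ℕ} {f : ℝ[X]}

theorem coeff_eq (hf : IsPalindromicNonposRooted d f) {i : ℕ} (hi : i ≤ d) :
    f.coeff i = f.coeff (d - i) := by
  conv_lhs => rw [← hf.reflect_eq, coeff_reflect, revAt_le hi]

theorem isRoot_inv (hf : IsPalindromicNonposRooted d f) {r : ℝ} (hr : f.IsRoot r) (hr0 : r ≠ 0) :
    f.IsRoot r⁻¹ := by
  have : Invertible r := invertibleOfNonzero hr0
  have h := (eval₂_reflect_eq_zero_iff (RingHom.id ℝ) r d f hf.natDegree_le).mpr hr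
  rwa [hf.reflect_eq, invOf_eq_inv] at h

theorem natDegree_eq_of_not_isRoot_zero (hf : IsPalindromicNonposRooted d f)
    (h0 : ¬f.IsRoot 0) : f.natDegree = d := by
  refine hf.natDegree_le.antisymm (le_natDegree_of_ne_zero ?_)
  rwa [hf.coeff_eq le_rfl, Nat.sub_self, coeff_zero_eq_eval_zero]

theorem of_mul {k : ℕ} {q h : ℝ[X]} (hf : IsPalindromicNonposRooted d (q * h)) (hf0 : q * h ≠ 0)
    (hkd : k ≤ d) (hqk : q.natDegree ≤ k) (hq : reflect k q = q) (hqlc : 0 < q.leadingCoeff)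
    (hh : h.natDegree ≤ d - k) : IsPalindromicNonposRooted (d - k) h where
  natDegree_le := hh
  reflect_eq := by
    have h1 := reflect_mul q h hqk hh
    rw [Nat.add_sub_cancel' hkd, hf.reflect_eq, hq] at h1
    exact (mul_left_cancel₀ (left_ne_zero_of_mul hf0) h1).symm
  splits := hf.splits.of_dvd hf0 (dvd_mul_left h q)
  leadingCoeff_nonneg := by
    have h1 := hf.leadingCoeff_nonneg
    rw [leadingCoeff_mul] at h1
    exact (mul_nonneg_iff_of_pos_left hqlc).mp h1
  nonpos_of_mem_roots x hx :=
    hf.nonpos_of_mem_roots x (Multiset.mem_of_le (roots.le_of_dvd hf0 (dvd_mul_left h q)) hx)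

theorem exists_X_mul (hf : IsPalindromicNonposRooted d f) (hf0 : f ≠ 0) (h0 : f.IsRoot 0) :
    2 ≤ d ∧ ∃ h, IsPalindromicNonposRooted (d - 2) h ∧ f = X * h := by
  obtain ⟨h, rfl⟩ : X ∣ f := X_dvd_iff.mpr (by rwa [coeff_zero_eq_eval_zero])
  have hdeg : (X * h).natDegree = h.natDegree + 1 := by
    rw [natDegree_mul X_ne_zero (right_ne_zero_of_mul hf0), natDegree_X, add_comm]
  have hne : (X * h).natDegree ≠ d := by
    intro hd
    have hcoeff : (X * h).coeff d = 0 := by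
      rw [hf.coeff_eq le_rfl, Nat.sub_self, coeff_zero_eq_eval_zero]; exact h0
    rw [← hd, coeff_natDegree, leadingCoeff_eq_zero] at hcoeff
    exact hf0 hcoeff
  have hd2 : 2 ≤ d := by have := hf.natDegree_le; omega
  refine ⟨hd2, h, hf.of_mul hf0 hd2 (natDegree_X_le.trans one_le_two) ?_ (by simp) ?_, rfl⟩
  · exact reflect_eq_self_of_coeff_eq fun i hi => by interval_cases i <;> simp [coeff_X]
  · have := hf.natDegree_le; omega

theorem exists_one_add_X_mul (hf : IsPalindromicNonposRooted d f) (hf0 : f ≠ 0)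
    (h1 : f.IsRoot (-1)) : 1 ≤ d ∧ ∃ h, IsPalindromicNonposRooted (d - 1) h ∧ f = (1 + X) * h := by
  have hX : (1 + X : ℝ[X]) = X - C (-1) := by rw [C_neg, C_1, sub_neg_eq_add, add_comm]
  obtain ⟨h, rfl⟩ : (1 + X) ∣ f := hX ▸ dvd_iff_isRoot.mpr h1
  have hdeg : ((1 + X) * h).natDegree = h.natDegree + 1 := by
    rw [natDegree_mul (left_ne_zero_of_mul hf0) (right_ne_zero_of_mul hf0), add_comm, hX,
      natDegree_X_sub_C]
  have hd1 : 1 ≤ d := by have := hf.natDegree_le; omega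
  refine ⟨hd1, h, hf.of_mul hf0 hd1 (by rw [hX, natDegree_X_sub_C]) ?_
    (by rw [hX, leadingCoeff_X_sub_C]; exact one_pos) ?_, rfl⟩
  · exact reflect_eq_self_of_coeff_eq fun i hi => by interval_cases i <;> simp [coeff_X, coeff_one]
  · have := hf.natDegree_le; omega

theorem exists_X_sub_C_mul_X_sub_C_inv_mul (hf : IsPalindromicNonposRooted d f) (hf0 : f ≠ 0)
    {r : ℝ} (hr : f.IsRoot r) (hneg : r < 0) (hr1 : r ≠ -1) :
    2 ≤ d ∧ ∃ h, IsPalindromicNonposRooted (d - 2) h ∧ f = (X - C r) * (X - C r⁻¹) * h := by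
  have hinv : r⁻¹ ≠ r := by
    intro h
    have hsq : r * r = 1 := by rw [← mul_inv_cancel₀ hneg.ne, h]
    exact hr1 (by nlinarith)
  have hq : ((X - C r) * (X - C r⁻¹)).Monic := (monic_X_sub_C r).mul (monic_X_sub_C r⁻¹)
  have hqdeg : ((X - C r) * (X - C r⁻¹)).natDegree = 2 := by
    rw [(monic_X_sub_C r).natDegree_mul (monic_X_sub_C r⁻¹), natDegree_X_sub_C, natDegree_X_sub_C]
  obtain ⟨h, rfl⟩ : (X - C r) * (X - C r⁻¹) ∣ f :=
    (isCoprime_X_sub_C_of_isUnit_sub (sub_ne_zero.mpr hinv.symm).isUnit).mul_dvd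
      (dvd_iff_isRoot.mpr hr) (dvd_iff_isRoot.mpr (hf.isRoot_inv hr hneg.ne))
  have hdeg := natDegree_mul hq.ne_zero (right_ne_zero_of_mul hf0)
  have hd2 : 2 ≤ d := by have := hf.natDegree_le; omega
  refine ⟨hd2, h, hf.of_mul hf0 hd2 hqdeg.le ?_ (by rw [hq.leadingCoeff]; exact one_pos) ?_, rfl⟩
  · rw [X_sub_C_mul_X_sub_C_inv_eq hneg.ne]
    exact reflect_eq_self_of_coeff_eq fun i hi => by interval_cases i <;> simp [coeff_X, coeff_one]
  · have := hf.natDegree_le; omega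

theorem exists_gammaCone_mul (hf : IsPalindromicNonposRooted d f) (hf0 : f ≠ 0) (hd : 0 < d) :
    ∃ k q h, 0 < k ∧ k ≤ d ∧ q ∈ gammaCone k ∧ IsPalindromicNonposRooted (d - k) h ∧
      f = q * h := by
  by_cases h0 : f.IsRoot 0
  · obtain ⟨hd2, h, hh, rfl⟩ := hf.exists_X_mul hf0 h0
    exact ⟨2, X, h, two_pos, hd2, X_mem_gammaCone_two, hh, rfl⟩
  by_cases h1 : f.IsRoot (-1)
  · obtain ⟨hd1, h, hh, rfl⟩ := hf.exists_one_add_X_mul hf0 h1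
    exact ⟨1, 1 + X, h, one_pos, hd1, one_add_X_mem_gammaCone_one, hh, rfl⟩
  have hdeg : f.degree ≠ 0 := by
    rw [degree_eq_natDegree hf0, hf.natDegree_eq_of_not_isRoot_zero h0]
    exact_mod_cast hd.ne'
  obtain ⟨r, hr⟩ := hf.splits.exists_eval_eq_zero hdeg
  have hneg : r < 0 := (hf.nonpos_of_mem_roots r ((mem_roots hf0).mpr hr)).lt_of_ne
    (by rintro rfl; exact h0 hr)
  obtain ⟨hd2, h, hh, rfl⟩ :=
    hf.exists_X_sub_C_mul_X_sub_C_inv_mul hf0 hr hneg (by rintro rfl; exact h1 hr)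
  exact ⟨2, _, h, two_pos, hd2, X_sub_C_mul_X_sub_C_inv_mem_gammaCone hneg, hh, rfl⟩

theorem mem_gammaCone (hf : IsPalindromicNonposRooted d f) : f ∈ gammaCone d := by
  induction d using Nat.strong_induction_on generalizing f with
  | _ d ih =>
  by_cases hf0 : f = 0
  · exact hf0 ▸ zero_mem _
  rcases Nat.eq_zero_or_pos d with rfl | hd
  · have hdeg := Nat.le_zero.mp hf.natDegree_le
    rw [eq_C_of_natDegree_eq_zero hdeg]
    exact C_mem_gammaCone_zero (by simpa [leadingCoeff, hdeg] using hf.leadingCoeff_nonneg)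
  obtain ⟨k, q, h, hk, hkd, hq, hh, rfl⟩ := hf.exists_gammaCone_mul hf0 hd
  simpa [Nat.add_sub_cancel' hkd] using mul_mem_gammaCone hq (ih (d - k) (by omega) hh)

end IsPalindromicNonposRooted

end Polynomial

theorem stmt8 (f : Polynomial ℝ) (d : ℕ)
    (hdeg : f.natDegree ≤ d)
    (hsym : ∀ i ≤ d, f.coeff i = f.coeff (d - i))
    (hnonneg : ∀ i, 0 ≤ f.coeff i)
    (hreal : f.Splits)
    (γ : ℕ → ℝ)
    (hγ0 : ∀ i, d / 2 < i → γ i = 0)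
    (hγ : f = ∑ i ∈ Finset.range (d / 2 + 1), C (γ i) * X ^ i * (1 + X) ^ (d - 2 * i)) :
    ∀ i, 0 ≤ γ i := by
  have hf : IsPalindromicNonposRooted d f :=
    ⟨hdeg, reflect_eq_self_of_coeff_eq hsym, hreal, hnonneg _,
      fun _ => nonpos_of_mem_roots_of_coeff_nonneg hnonneg⟩
  obtain ⟨γ', hγ'0, hγ'⟩ := exists_gamma_of_mem_gammaCone hf.mem_gammaCone
  intro i
  rcases le_or_gt i (d / 2) with hi | hi
  · rw [gamma_unique (hγ.symm.trans hγ') hi]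
    exact hγ'0 i
  · rw [hγ0 i hi]
end

section
/- For every k ≥ 1, the identity ∑_{ℓ=1}^{k} ∑_{(j_1,…,j_{ℓ+1}) : j_1+⋯+j_{ℓ+1}=k-ℓ, j_m ≥ 0} ∏_{m=1}^{ℓ+1} (j_m+1)^{j_m}/(j_m+1)! = k·(k+1)^k/(k+1)! holds. -/
/-!
With the Abel polynomials `A_n(x) = x (x + n)^(n-1)` one has `(j + 1)^j / (j + 1)! = A_j(1) / j!`.
By Abel's identity (proved with finite differences) the `A_n` are of binomial type, i.e. the
series `E_x = ∑ A_n(x) tⁿ / n!` satisfy `E_x E_y = E_{x+y}`. Hence the inner sum, the coefficient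
of `t^(k-ℓ)` in `E_1^(ℓ+1) = E_{ℓ+1}`, equals `A_{k-ℓ}(ℓ+1) / (k-ℓ)!`, and the sum of these over
`ℓ` telescopes because `(x + q) A_q(x) = x (x + q)^q`.
-/

open Finset
open scoped Nat

section CommRing

variable {R : Type*} [CommRing R]

theorem sum_range_neg_one_pow_mul_choose_mul_add_pow_eq_zero {j n : ℕ} (h : j < n) (x : R) :
    ∑ k ∈ range (n + 1), (-1) ^ (n - k) * (n.choose k : R) * (x + k) ^ j = 0 := by
  have := congrFun (fwdDiff_iter_pow_eq_zero_of_lt (R := R) h) x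
  rw [fwdDiff_iter_eq_sum_shift] at this
  simpa [zsmul_eq_mul] using this

theorem sum_range_choose_mul_of_le {m n : ℕ} (h : m ≤ n) (f : ℕ → R) :
    ∑ i ∈ range (n + 1), (m.choose i : R) * f i = ∑ i ∈ range (m + 1), (m.choose i : R) * f i := by
  refine (sum_subset (range_subset_range.mpr (by omega)) fun i _ hi => ?_).symm
  rw [Nat.choose_eq_zero_of_lt (by simpa using hi), Nat.cast_zero, zero_mul]

theorem Nat.choose_mul_choose_sub_comm (n p i : ℕ) :
    n.choose p * (n - p).choose i = n.choose i * (n - i).choose p := by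
  have hp := Nat.choose_mul (n := n) (k := p + i) (s := p) (by omega)
  have hi := Nat.choose_mul (n := n) (k := p + i) (s := i) (by omega)
  rw [Nat.add_sub_cancel_left] at hp
  rw [Nat.add_sub_cancel] at hi
  rw [← hp, ← hi, Nat.choose_symm_add]

def abelPoly (x : R) : ℕ → R
  | 0 => 1
  | n + 1 => x * (x + (n + 1)) ^ n

@[simp] theorem abelPoly_zero (x : R) : abelPoly x 0 = 1 := rfl

theorem abelPoly_succ (x : R) (n : ℕ) : abelPoly x (n + 1) = x * (x + (n + 1)) ^ n := rfl

theorem abelPoly_eq_pow_sub (x : R) (n : ℕ) :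
    abelPoly x n = (x + n) ^ n - n * (x + n) ^ (n - 1) := by
  cases n with
  | zero => simp
  | succ n => rw [abelPoly_succ]; push_cast; ring

theorem add_mul_abelPoly (x : R) (n : ℕ) : (x + n) * abelPoly x n = x * (x + n) ^ n := by
  rw [abelPoly_eq_pow_sub]
  cases n with
  | zero => simp
  | succ n => push_cast; ring

theorem abelPoly_mul_add_pow_sub {p N : ℕ} (hp : p ≤ N) (hN : 0 < N) (x : R) :
    abelPoly x p * (x + p) ^ (N - p) = x * (x + p) ^ (N - 1) := by
  cases p with
  | zero =>
    rw [abelPoly_zero, one_mul, Nat.cast_zero, add_zero, ← pow_succ', Nat.sub_add_cancel hN,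
      Nat.sub_zero]
  | succ p => rw [abelPoly_succ, mul_assoc]; push_cast; rw [← pow_add]; congr 2; omega

theorem sum_range_choose_mul_abelPoly_mul_neg_pow_eq_zero {N : ℕ} (hN : 0 < N) (x : R) :
    ∑ p ∈ range (N + 1), (N.choose p : R) * (abelPoly x p * (-(x + p)) ^ (N - p)) = 0 := by
  calc _ = x * ∑ p ∈ range (N + 1), (-1) ^ (N - p) * (N.choose p : R) * (x + p) ^ (N - 1) := by
        rw [mul_sum]
        refine sum_congr rfl fun p hp => ?_
        rw [neg_pow]
        linear_combination ((N.choose p : R) * (-1) ^ (N - p)) *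
          abelPoly_mul_add_pow_sub (Nat.lt_succ_iff.mp (mem_range.mp hp)) hN x
    _ = 0 := by rw [sum_range_neg_one_pow_mul_choose_mul_add_pow_eq_zero (by omega), mul_zero]

/-- Abel's identity. -/
theorem sum_antidiagonal_choose_mul_abelPoly_mul_pow (n : ℕ) (x y : R) :
    ∑ pq ∈ antidiagonal n, (n.choose pq.1 : R) * abelPoly x pq.1 * (y + pq.2) ^ pq.2 =
      (x + y + n) ^ n := by
  set z := x + y + n
  -- Expanding `y + q = z - (x + p)` binomially, the coefficient of `z ^ i` for `i < n` is an
  -- `(n - i)`-th finite difference of a polynomial of degree `n - i - 1`.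
  have vanish (i : ℕ) (hi : i < n) :
      ∑ p ∈ range (n + 1), ((n - i).choose p : R) * (abelPoly x p * (-(x + p)) ^ (n - i - p)) =
        0 := by
    rw [sum_range_choose_mul_of_le (Nat.sub_le n i)]
    exact sum_range_choose_mul_abelPoly_mul_neg_pow_eq_zero (Nat.sub_pos_of_lt hi) x
  calc _ = ∑ p ∈ range (n + 1), (n.choose p : R) * abelPoly x p * (z + -(x + p)) ^ (n - p) := by
        rw [Nat.sum_antidiagonal_eq_sum_range_succ_mk]
        refine sum_congr rfl fun p hp => ?_
        rw [Nat.cast_sub (Nat.lt_succ_iff.mp (mem_range.mp hp))]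
        simp only [z]
        ring_nf
    _ = ∑ p ∈ range (n + 1), ∑ i ∈ range (n + 1), (n.choose i : R) * z ^ i *
          ((n - i).choose p * (abelPoly x p * (-(x + p)) ^ (n - i - p))) := by
        refine sum_congr rfl fun p _ => ?_
        rw [add_pow, mul_sum]
        calc _ = ∑ i ∈ range (n - p + 1), ((n - p).choose i : R) *
              ((n.choose p : R) * abelPoly x p * z ^ i * (-(x + p)) ^ (n - p - i)) :=
              sum_congr rfl fun i _ => by ring
          _ = _ := by
              rw [← sum_range_choose_mul_of_le (Nat.sub_le n p)]
              refine sum_congr rfl fun i _ => ?_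
              have h := congrArg (Nat.cast : ℕ → R) (Nat.choose_mul_choose_sub_comm n p i)
              push_cast at h
              rw [Nat.sub_right_comm]
              linear_combination (abelPoly x p * z ^ i * (-(x + p)) ^ (n - i - p)) * h
    _ = ∑ i ∈ range (n + 1), (n.choose i : R) * z ^ i *
          ∑ p ∈ range (n + 1),
            ((n - i).choose p : R) * (abelPoly x p * (-(x + p)) ^ (n - i - p)) := by
        rw [sum_comm]; simp_rw [mul_sum]
    _ = z ^ n := by
        rw [sum_range_succ, sum_eq_zero fun i hi => by rw [vanish i (mem_range.mp hi), mul_zero]]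
        simp [sum_range_succ']

/-- Hurwitz's form of Abel's identity: the Abel polynomials are of binomial type. -/
theorem sum_antidiagonal_choose_mul_abelPoly_mul_abelPoly (n : ℕ) (x y : R) :
    ∑ pq ∈ antidiagonal n, (n.choose pq.1 : R) * abelPoly x pq.1 * abelPoly y pq.2 =
      abelPoly (x + y) n := by
  cases n with
  | zero => simp
  | succ m =>
    have shifted : ∑ pq ∈ antidiagonal (m + 1), ((m + 1).choose pq.1 : R) * abelPoly x pq.1 *
        (pq.2 * (y + pq.2) ^ (pq.2 - 1)) = (m + 1) * (x + (y + 1) + m) ^ m := by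
      rw [Nat.sum_antidiagonal_succ', ← sum_antidiagonal_choose_mul_abelPoly_mul_pow, mul_sum]
      simp only [Nat.cast_zero, zero_mul, mul_zero, zero_add, Nat.add_sub_cancel]
      refine sum_congr rfl fun ⟨p, q⟩ hpq => ?_
      obtain rfl : p + q = m := mem_antidiagonal.mp hpq
      have h := congrArg (Nat.cast : ℕ → R) (Nat.choose_mul_succ_eq (p + q) p)
      rw [show p + q + 1 - p = q + 1 by omega] at h
      push_cast at h ⊢
      linear_combination -(abelPoly x p * (y + 1 + q) ^ q) * h
    simp_rw [abelPoly_eq_pow_sub y, mul_sub, sum_sub_distrib,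
      sum_antidiagonal_choose_mul_abelPoly_mul_pow, shifted, abelPoly_eq_pow_sub (x + y)]
    push_cast
    ring

end CommRing

theorem PowerSeries.coeff_prod_eq_sum_antidiagonalTuple {R : Type*} [CommSemiring R] {m : ℕ}
    (f : Fin m → PowerSeries R) (n : ℕ) :
    coeff n (∏ i, f i) = ∑ j ∈ Nat.antidiagonalTuple m n, ∏ i, coeff (j i) (f i) := by
  rw [coeff_prod, finsuppAntidiag, sum_map, ← piAntidiag_univ_fin_eq_antidiagonalTuple]
  exact sum_attach (piAntidiag univ n) fun j => ∏ i, coeff (j i) (f i)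

section Field

variable {K : Type*} [Field K]

open PowerSeries

noncomputable def abelSeries (x : K) : PowerSeries K :=
  PowerSeries.mk fun n => abelPoly x n / n !

theorem abelSeries_zero : abelSeries (0 : K) = 1 := by
  ext (_ | n) <;> simp [abelSeries, abelPoly_succ, coeff_one]

variable [CharZero K]

theorem abelSeries_add (x y : K) : abelSeries (x + y) = abelSeries x * abelSeries y := by
  ext n
  simp only [abelSeries, coeff_mul, coeff_mk]
  rw [← sum_antidiagonal_choose_mul_abelPoly_mul_abelPoly, sum_div]
  refine sum_congr rfl fun ⟨p, q⟩ hpq => ?_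
  obtain rfl : p + q = n := mem_antidiagonal.mp hpq
  have : ((p + q)! : K) ≠ 0 := Nat.cast_ne_zero.mpr (Nat.factorial_ne_zero _)
  rw [Nat.cast_add_choose]
  field_simp

theorem prod_abelSeries {ι : Type*} (s : Finset ι) (x : ι → K) :
    ∏ i ∈ s, abelSeries (x i) = abelSeries (∑ i ∈ s, x i) := by
  induction s using Finset.cons_induction with
  | empty => simp [abelSeries_zero]
  | cons a s _ ih => rw [prod_cons, sum_cons, ih, abelSeries_add]

theorem sum_antidiagonalTuple_prod_abelPoly_div_factorial {m : ℕ} (x : Fin m → K) (n : ℕ) :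
    ∑ j ∈ Nat.antidiagonalTuple m n, ∏ i, abelPoly (x i) (j i) / (j i)! =
      abelPoly (∑ i, x i) n / n ! := by
  simpa [abelSeries, coeff_prod_eq_sum_antidiagonalTuple] using
    congrArg (coeff n) (prod_abelSeries univ x)

theorem add_one_pow_div_factorial_succ (n : ℕ) :
    ((n : K) + 1) ^ n / (n + 1)! = abelPoly 1 n / n ! := by
  have h := add_mul_abelPoly (1 : K) n
  have : (n ! : K) ≠ 0 := Nat.cast_ne_zero.mpr (Nat.factorial_ne_zero _)
  rw [Nat.factorial_succ]
  push_cast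
  field_simp
  linear_combination -h

theorem mul_sum_range_abelPoly_sub_div_factorial (N : K) (k : ℕ) :
    N * ∑ q ∈ range k, abelPoly (N - q) q / q ! = k * N ^ k / k ! := by
  have step (q : ℕ) : N * (abelPoly (N - q) q / q !) =
      (q + 1 : ℕ) * N ^ (q + 1) / (q + 1)! - q * N ^ q / q ! := by
    have h := add_mul_abelPoly (N - q) q
    rw [sub_add_cancel] at h
    have : (q ! : K) ≠ 0 := Nat.cast_ne_zero.mpr (Nat.factorial_ne_zero _)
    rw [Nat.factorial_succ]
    push_cast
    field_simp
    linear_combination h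
  rw [mul_sum, sum_congr rfl fun q _ => step q, sum_range_sub fun q => (q : K) * N ^ q / q !]
  simp

end Field

theorem stmt9_general (k : ℕ) :
    ∑ ℓ ∈ Finset.Icc 1 k, ∑ j ∈ Finset.Nat.antidiagonalTuple (ℓ + 1) (k - ℓ),
        ∏ m : Fin (ℓ + 1), ((j m + 1 : ℚ)) ^ (j m) / (Nat.factorial (j m + 1) : ℚ) =
      (k : ℚ) * (k + 1) ^ k / (Nat.factorial (k + 1) : ℚ) := by
  have inner (ℓ : ℕ) : ∑ j ∈ Nat.antidiagonalTuple (ℓ + 1) (k - ℓ),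
      ∏ m : Fin (ℓ + 1), ((j m + 1 : ℚ)) ^ (j m) / (Nat.factorial (j m + 1) : ℚ) =
        abelPoly ((ℓ : ℚ) + 1) (k - ℓ) / (k - ℓ)! := by
    simp_rw [add_one_pow_div_factorial_succ]
    simpa using
      sum_antidiagonalTuple_prod_abelPoly_div_factorial (fun _ : Fin (ℓ + 1) => (1 : ℚ)) (k - ℓ)
  have reflect : ∑ ℓ ∈ Icc 1 k, abelPoly ((ℓ : ℚ) + 1) (k - ℓ) / (k - ℓ)! =
      ∑ q ∈ range k, abelPoly ((k : ℚ) + 1 - q) q / q ! := by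
    refine sum_nbij' (k - ·) (k - ·) ?_ ?_ ?_ ?_ fun ℓ hℓ => ?_
    iterate 4 intro _ h; simp only [mem_Icc, mem_range] at *; omega
    · rw [Nat.cast_sub (mem_Icc.mp hℓ).2]
      congr 2
      ring
  have hk : (k : ℚ) + 1 ≠ 0 := by positivity
  rw [sum_congr rfl fun ℓ _ => inner ℓ, reflect, ← mul_right_inj' hk,
    mul_sum_range_abelPoly_sub_div_factorial, Nat.factorial_succ]
  push_cast
  field_simp

theorem stmt9 (k : ℕ) (hk : 1 ≤ k) :
    ∑ ℓ ∈ Finset.Icc 1 k, ∑ j ∈ Finset.Nat.antidiagonalTuple (ℓ + 1) (k - ℓ),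
        ∏ m : Fin (ℓ + 1), ((j m + 1 : ℚ)) ^ (j m) / (Nat.factorial (j m + 1) : ℚ) =
      (k : ℚ) * (k + 1) ^ k / (Nat.factorial (k + 1) : ℚ) :=
  stmt9_general k
end

section
/- Let W(t) = ∑_{j≥0} (-(j+1))^j/(j+1)! · t^{j+1} as a formal power series over ℚ. Then W(t)·exp(W(t)) = t as formal power series. -/
/-!
Put `F = W * exp W`. Since `(exp W)' = W' * exp W`, we get `X * F' = X * W' * (1 + W) * exp W`, so
`F` satisfies `X * F' = F` as soon as `X * W' * (1 + W) = W`, and then `F` is a multiple of `X`.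
Comparing coefficients, that differential equation, in the form `X * W' = W * (1 - X * W')`, is the
identity `∑ k, C(n+1, k+1) (k+1)^k (n-k)^(n-k) = (n+1)^(n+1)`. This is the value at `y = n + 1` of
`∑ k, C(n+1, k+1) (k+1)^k (y-k-1)^(n-k) = (n+1) y^n`, which holds because both sides have the same
derivative in `y` (by induction on `n`) and vanish at `y = 0` (an `(n+1)`-st finite difference of a
polynomial of degree `n`).
-/

open PowerSeries Finset

/-- The principal branch of the Lambert W function, as a formal power series:
`W(t) = ∑_{j≥0} (-(j+1))^j/(j+1)! · t^{j+1}`. -/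
noncomputable def lambertW : PowerSeries ℚ :=
  PowerSeries.mk fun n => if n = 0 then 0 else (-(n : ℚ)) ^ (n - 1) / (Nat.factorial n : ℚ)

/-- The formal exponential of a power series `f` with zero constant term:
the coefficient of `t^n` in `exp f` is `∑_{ℓ=0}^{n} (coeff of t^n in f^ℓ)/ℓ!`
(the sum is finite since `f^ℓ` has order `≥ ℓ`). -/
noncomputable def formalExp (f : PowerSeries ℚ) : PowerSeries ℚ :=
  PowerSeries.mk fun n =>
    ∑ ℓ ∈ Finset.range (n + 1), (PowerSeries.coeff (R := ℚ) n (f ^ ℓ)) / (Nat.factorial ℓ : ℚ)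

theorem sum_range_neg_one_pow_mul_choose_mul_pow_eq_zero {R : Type*} [CommRing R] {j n : ℕ}
    (h : j < n) : ∑ k ∈ range (n + 1), (-1 : R) ^ (n - k) * n.choose k * (k : R) ^ j = 0 := by
  have := congrFun (fwdDiff_iter_pow_eq_zero_of_lt (R := R) h) 0
  simpa [fwdDiff_iter_eq_sum_shift] using this

namespace Polynomial

variable {R : Type*} [CommRing R]

/-- The coefficient of `x` in Abel's identity
`∑ k, C(n+1, k) x (x + k)^(k-1) (y - k)^(n+1-k) = (x + y)^(n+1)`, as a polynomial in `y`. -/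
noncomputable def abelSum (n : ℕ) : R[X] :=
  ∑ k ∈ range (n + 1),
    C (((n + 1).choose (k + 1) : R) * ((k : R) + 1) ^ k) * (X - C ((k : R) + 1)) ^ (n - k)

theorem derivative_abelSum_succ (n : ℕ) :
    derivative (abelSum (R := R) (n + 1)) = C ((n : R) + 2) * abelSum n := by
  rw [abelSum, abelSum, derivative_sum, sum_range_succ, mul_sum]
  simp only [derivative_C_mul, derivative_X_sub_C_pow, Nat.sub_self, Nat.cast_zero, C_0, zero_mul,
    mul_zero, add_zero]
  refine sum_congr rfl fun k hk => ?_
  have hk : k ≤ n := Nat.lt_succ_iff.mp (mem_range.mp hk)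
  have hchoose : ((n + 2).choose (k + 1) : R) * ((n + 1 - k : ℕ) : R)
      = ((n + 1).choose (k + 1) : R) * ((n : R) + 2) := by
    have h : (n + 2).choose (k + 1) * (n + 1 - k) = (n + 1).choose (k + 1) * (n + 2) := by
      rw [Nat.choose_mul_succ_eq, show n + 1 + 1 - (k + 1) = n + 1 - k by omega]
    have := congrArg (Nat.cast (R := R)) h
    push_cast at this
    exact this
  rw [show n + 1 - k - 1 = n - k by omega, ← mul_assoc, ← C_mul, ← mul_assoc, ← C_mul]
  congr 2
  linear_combination ((k : R) + 1) ^ k * hchoose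

theorem eval_zero_abelSum_succ (n : ℕ) : (abelSum (R := R) (n + 1)).eval 0 = 0 := by
  have h := sum_range_neg_one_pow_mul_choose_mul_pow_eq_zero (R := R) (Nat.lt_succ_self (n + 1))
  rw [sum_range_succ'] at h
  simp only [Nat.cast_zero, zero_pow (Nat.succ_ne_zero n), mul_zero, add_zero] at h
  simp only [abelSum, eval_finsetSum, eval_mul, eval_C, eval_pow, eval_sub, eval_X, zero_sub]
  rw [← h]
  refine sum_congr rfl fun k hk => ?_
  have hk : k ≤ n + 1 := Nat.lt_succ_iff.mp (mem_range.mp hk)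
  have hpow : ((k : R) + 1) ^ k * ((k : R) + 1) ^ (n + 1 - k) = ((k : R) + 1) ^ (n + 1) := by
    rw [← pow_add, Nat.add_sub_cancel' hk]
  rw [neg_pow, show n + 2 - (k + 1) = n + 1 - k by omega]
  push_cast
  linear_combination (-1 : R) ^ (n + 1 - k) * ((n + 2).choose (k + 1) : R) * hpow

theorem abelSum_eq [IsAddTorsionFree R] (n : ℕ) :
    abelSum (R := R) n = C ((n : R) + 1) * X ^ n := by
  induction n with
  | zero => simp [abelSum]
  | succ n ih =>
    have hderiv : derivative (abelSum (R := R) (n + 1) - C ((n : R) + 2) * X ^ (n + 1)) = 0 := by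
      rw [derivative_sub, derivative_abelSum_succ, ih, derivative_C_mul, derivative_X_pow]
      push_cast
      ring
    have := eq_C_of_derivative_eq_zero hderiv
    simp only [coeff_zero_eq_eval_zero, eval_sub, eval_zero_abelSum_succ, eval_mul, eval_C,
      eval_pow, eval_X, zero_pow (Nat.succ_ne_zero n), mul_zero, sub_zero, C_0] at this
    rw [sub_eq_zero.mp this, Nat.cast_succ, add_assoc, one_add_one_eq_two]

end Polynomial

theorem Nat.sum_choose_mul_pow_mul_pow_eq (n : ℕ) :
    ∑ k ∈ range (n + 1), (n + 1).choose (k + 1) * (k + 1) ^ k * (n - k) ^ (n - k)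
      = (n + 1) ^ (n + 1) := by
  have h := congrArg (Polynomial.eval ((n : ℤ) + 1)) (Polynomial.abelSum_eq (R := ℤ) n)
  simp only [Polynomial.abelSum, Polynomial.eval_finsetSum, Polynomial.eval_mul, Polynomial.eval_C,
    Polynomial.eval_pow, Polynomial.eval_sub, Polynomial.eval_X] at h
  zify
  rw [_root_.pow_succ', ← h]
  refine sum_congr rfl fun k hk => ?_
  rw [Nat.cast_sub (Nat.lt_succ_iff.mp (mem_range.mp hk))]
  ring

namespace PowerSeries

theorem coeff_pow_eq_zero_of_lt {R : Type*} [CommSemiring R] {f : R⟦X⟧}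
    (hf : constantCoeff f = 0) {n d : ℕ} (h : n < d) : coeff n (f ^ d) = 0 :=
  X_pow_dvd_iff.mp (pow_dvd_pow_of_dvd (X_dvd_iff.mpr hf) d) n h

theorem eq_C_mul_X_of_X_mul_derivative_eq {R : Type*} [CommRing R] [IsAddTorsionFree R]
    {f : R⟦X⟧} (h : X * d⁄dX R f = f) : f = C (coeff 1 f) * X := by
  ext n
  rw [coeff_C_mul, coeff_X]
  obtain _ | _ | m := n
  · rw [← h, coeff_zero_X_mul]; simp
  · simp
  · have hm := congrArg (coeff (m + 2)) h
    rw [coeff_succ_X_mul, coeff_derivative] at hm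
    have : (m + 1) • coeff (m + 2) f = 0 := by
      rw [nsmul_eq_mul]
      push_cast at hm ⊢
      linear_combination hm
    simpa using (nsmul_right_injective (Nat.succ_ne_zero m)) (this.trans (nsmul_zero _).symm)

theorem formalExp_eq_subst {f : ℚ⟦X⟧} (hf : constantCoeff f = 0) :
    formalExp f = (exp ℚ).subst f := by
  ext n
  rw [coeff_subst' (HasSubst.of_constantCoeff_zero' hf),
    finsum_eq_sum_of_support_subset (s := range (n + 1))]
  · simp [formalExp, coeff_exp, div_eq_inv_mul]
  · intro d hd
    by_contra hdn
    simp only [coe_range, Set.mem_Iio, not_lt] at hdn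
    exact hd (by simp only [coeff_pow_eq_zero_of_lt hf (Nat.lt_of_succ_le hdn), smul_zero])

theorem derivative_formalExp {f : ℚ⟦X⟧} (hf : constantCoeff f = 0) :
    d⁄dX ℚ (formalExp f) = formalExp f * d⁄dX ℚ f := by
  rw [formalExp_eq_subst hf, derivative_subst (HasSubst.of_constantCoeff_zero' hf), derivative_exp]

theorem constantCoeff_formalExp (f : ℚ⟦X⟧) : constantCoeff (formalExp f) = 1 := by
  simp [formalExp]

end PowerSeries

theorem coeff_lambertW_succ (n : ℕ) :
    coeff (n + 1) lambertW = (-((n : ℚ) + 1)) ^ n / (n + 1).factorial := by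
  simp [lambertW]

theorem constantCoeff_lambertW : constantCoeff lambertW = 0 := by
  simp [lambertW]

theorem coeff_one_sub_X_mul_derivative_lambertW (n : ℕ) :
    coeff n (1 - X * d⁄dX ℚ lambertW) = (-(n : ℚ)) ^ n / n.factorial := by
  obtain _ | n := n
  · simp
  · rw [map_sub, coeff_succ_X_mul, coeff_derivative, coeff_lambertW_succ, coeff_one,
      if_neg n.succ_ne_zero, Nat.factorial_succ]
    push_cast
    field_simp
    ring

theorem X_mul_derivative_lambertW :
    X * d⁄dX ℚ lambertW = lambertW * (1 - X * d⁄dX ℚ lambertW) := by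
  ext n
  obtain _ | n := n
  · simp [coeff_zero_eq_constantCoeff, constantCoeff_lambertW]
  rw [coeff_succ_X_mul, coeff_derivative, coeff_mul, Finset.Nat.sum_antidiagonal_succ,
    coeff_zero_eq_constantCoeff_apply, constantCoeff_lambertW, zero_mul, zero_add,
    Finset.Nat.sum_antidiagonal_eq_sum_range_succ_mk]
  simp only [coeff_lambertW_succ, coeff_one_sub_X_mul_derivative_lambertW]
  have abel : ∑ k ∈ range (n + 1), ((n + 1).choose (k + 1) : ℚ) * ((k : ℚ) + 1) ^ k
      * ((n - k : ℕ) : ℚ) ^ (n - k) = ((n : ℚ) + 1) ^ (n + 1) := by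
    exact_mod_cast Nat.sum_choose_mul_pow_mul_pow_eq n
  calc (-((n : ℚ) + 1)) ^ n / (n + 1).factorial * ((n : ℚ) + 1)
      = (-1) ^ n / (n + 1).factorial * ((n : ℚ) + 1) ^ (n + 1) := by rw [neg_pow]; ring
    _ = _ := by
      rw [← abel, mul_sum]
      refine sum_congr rfl fun k hk => ?_
      have hk : k ≤ n := Nat.lt_succ_iff.mp (mem_range.mp hk)
      rw [Nat.cast_choose ℚ (Nat.succ_le_succ hk), Nat.succ_sub_succ, neg_pow ((k : ℚ) + 1),
        neg_pow ((n - k : ℕ) : ℚ), ← Nat.add_sub_cancel' hk, pow_add, Nat.add_sub_cancel_left]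
      field_simp

theorem stmt10 : lambertW * formalExp lambertW = PowerSeries.X := by
  have hEuler : X * d⁄dX ℚ (lambertW * formalExp lambertW) = lambertW * formalExp lambertW := by
    rw [Derivation.leibniz, derivative_formalExp constantCoeff_lambertW, smul_eq_mul, smul_eq_mul]
    linear_combination formalExp lambertW * X_mul_derivative_lambertW
  rw [eq_C_mul_X_of_X_mul_derivative_eq hEuler]
  simp [coeff_mul, Finset.Nat.sum_antidiagonal_succ, coeff_zero_eq_constantCoeff,
    constantCoeff_lambertW, constantCoeff_formalExp, coeff_lambertW_succ]
end

section
/- For all n ≥ 3, the coefficient a_{n,2} of t^2 in P_n (equal to rk H^4(M̄_{0,n})) satisfies a_{n,2} = (1/2)·3^n - ((n^2 + 3n + 4)/8)·2^n + (3n^4 - 10n^3 + 33n^2 - 26n + 12)/24, where P_n is determined by the recursion P_3 = 1, P_n = P_{n-1}(1+t) + t·∑_{i=3}^{n-2} C(n-2,i-1) P_i P_{n+1-i}. -/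
/-!
Comparing coefficients of `t⁰, t¹, t²` in the recursion gives `a_{n,0} = 1`,
`a_{n,1} = a_{n-1,1} + 1 + ∑ C(n-2,i-1)` and
`a_{n,2} = a_{n-1,2} + a_{n-1,1} + ∑ C(n-2,i-1) (a_{i,1} + a_{n+1-i,1})`.
The first gives `a_{n,1} = 2^{n-1} - C(n,2) - 1`. With `m = n - 2`, both sums in the second are,
up to boundary terms, full binomial transforms `∑_{l ≤ m} C(m,l) f(l)` (the part with
`a_{n+1-i,1}` after the reflection `l ↦ m - l`) of functions `f` that are combinations of
`2^l, l(l-1), l, 1`; these are evaluated by `∑ C(m,l) 2^l = 3^m`, `∑ C(m,l) l = m 2^{m-1}` and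
`∑ C(m,l) l(l-1) = m(m-1) 2^{m-2}`, and the closed form for `a_{n,2}` follows by induction.
-/

open Polynomial Finset

lemma sum_range_choose_mul_two_pow (m : ℕ) :
    ∑ l ∈ range (m + 1), (m.choose l : ℚ) * 2 ^ l = 3 ^ m := by
  rw [show (3 : ℚ) = 2 + 1 by norm_num, add_pow]
  simp [mul_comm]

lemma sum_range_choose_mul_natCast (k : ℕ) :
    ∑ l ∈ range (k + 2), ((k + 1).choose l : ℚ) * l = (k + 1) * 2 ^ k := by
  have := Nat.sum_range_mul_choose (k + 1)
  rw [Nat.add_sub_cancel] at this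
  exact_mod_cast (sum_congr rfl fun l _ => mul_comm _ _).trans this

lemma sum_range_choose_mul_natCast_mul_sub_one (k : ℕ) :
    ∑ l ∈ range (k + 3), ((k + 2).choose l : ℚ) * (l * (l - 1))
      = (k + 2) * (k + 1) * 2 ^ k := by
  rw [sum_range_succ', Nat.cast_zero, zero_mul, mul_zero, add_zero]
  have hterm : ∀ j ∈ range (k + 2),
      ((k + 2).choose (j + 1) : ℚ) * ((j + 1 : ℕ) * ((j + 1 : ℕ) - 1))
        = (k + 2) * (((k + 1).choose j : ℚ) * j) := by
    intro j _
    have h : ((k + 2 : ℕ) : ℚ) * ((k + 1).choose j : ℚ)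
        = ((k + 2).choose (j + 1) : ℚ) * (j + 1) := by
      exact_mod_cast Nat.add_one_mul_choose_eq (k + 1) j
    push_cast at h ⊢
    linear_combination (j : ℚ) * h.symm
  rw [sum_congr rfl hterm, ← mul_sum, sum_range_choose_mul_natCast]
  ring

lemma sum_range_choose_mul_quadratic_add_two_pow (k : ℕ) (a b c d : ℚ) :
    ∑ l ∈ range (k + 3), ((k + 2).choose l : ℚ) * (a * 2 ^ l + b * (l * (l - 1)) + c * l + d)
      = a * 3 ^ (k + 2) + b * ((k + 2) * (k + 1) * 2 ^ k) + c * ((k + 2) * 2 ^ (k + 1))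
        + d * 2 ^ (k + 2) := by
  have h1 := sum_range_choose_mul_natCast (k + 1)
  have h0 : ∑ l ∈ range (k + 3), ((k + 2).choose l : ℚ) = 2 ^ (k + 2) := by
    exact_mod_cast Nat.sum_range_choose (k + 2)
  push_cast at h1
  simp only [mul_add, sum_add_distrib, mul_left_comm _ a, mul_left_comm _ b, mul_left_comm _ c,
    mul_comm _ d, ← mul_sum, sum_range_choose_mul_two_pow, h0, h1,
    sum_range_choose_mul_natCast_mul_sub_one]
  ring

lemma sum_range_choose_add_two_mul (k : ℕ) (g : ℕ → ℚ) :
    ∑ j ∈ range k, ((k + 2).choose (j + 2) : ℚ) * g (j + 2)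
      = ∑ l ∈ range (k + 3), ((k + 2).choose l : ℚ) * g l
        - g 0 - (k + 2) * g 1 - g (k + 2) := by
  rw [sum_range_succ, sum_range_succ', sum_range_succ']
  simp only [zero_add, Nat.choose_zero_right, Nat.choose_one_right, Nat.choose_self,
    Nat.cast_add, Nat.cast_ofNat, Nat.cast_one, one_mul]
  ring

lemma sum_range_choose_mul_reflect (m : ℕ) (f : ℕ → ℚ) :
    ∑ l ∈ range (m + 1), (m.choose l : ℚ) * f (m - l)
      = ∑ l ∈ range (m + 1), (m.choose l : ℚ) * f l := by
  rw [← sum_range_reflect]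
  refine sum_congr rfl fun l hl => ?_
  have hl : l ≤ m := Nat.lt_succ_iff.mp (mem_range.mp hl)
  rw [Nat.add_sub_cancel, Nat.choose_symm hl, Nat.sub_sub_self hl]

-- `2 ^ n / 2` rather than `2 ^ (n - 1)`, so that no truncated subtraction occurs.
def keelCoeffOne (n : ℕ) : ℚ := 2 ^ n / 2 - n * (n - 1) / 2 - 1

def keelCoeffTwo (n : ℕ) : ℚ := (1/2) * 3 ^ n - (((n : ℚ)^2 + 3*n + 4) / 8) * 2 ^ n
  + (3*(n : ℚ)^4 - 10*n^3 + 33*n^2 - 26*n + 12) / 24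

lemma sum_range_choose_mul_keelCoeffOne_add_one (k : ℕ) :
    ∑ l ∈ range (k + 3), ((k + 2).choose l : ℚ) * keelCoeffOne (l + 1)
      = 3 ^ (k + 2) - (k + 2) * (k + 1) * 2 ^ k / 2 - (k + 2) * 2 ^ (k + 1) - 2 ^ (k + 2) := by
  convert sum_range_choose_mul_quadratic_add_two_pow k 1 (-1/2) (-1) (-1) using 1
  · refine sum_congr rfl fun l _ => ?_
    simp only [keelCoeffOne]
    push_cast
    ring
  · ring

lemma sum_range_choose_mul_keelCoeffOne_add_two (k : ℕ) :
    ∑ l ∈ range (k + 3), ((k + 2).choose l : ℚ) * keelCoeffOne (l + 2)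
      = 2 * 3 ^ (k + 2) - (k + 2) * (k + 1) * 2 ^ k / 2 - 2 * (k + 2) * 2 ^ (k + 1)
        - 2 * 2 ^ (k + 2) := by
  convert sum_range_choose_mul_quadratic_add_two_pow k 2 (-1/2) (-2) (-2) using 1
  · refine sum_congr rfl fun l _ => ?_
    simp only [keelCoeffOne]
    push_cast
    ring
  · ring

lemma coeff_one_mul_of_coeff_zero_eq_one {R : Type*} [Semiring R] {p q : R[X]}
    (hp : p.coeff 0 = 1) (hq : q.coeff 0 = 1) : (p * q).coeff 1 = p.coeff 1 + q.coeff 1 := by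
  simp [coeff_mul, Nat.antidiagonal_succ, hp, hq, add_comm]

def KeelRecursion (P : ℕ → ℤ[X]) : Prop :=
  ∀ n, 3 < n → P n = P (n - 1) * (1 + X) +
    X * ∑ i ∈ Icc 3 (n - 2), ((n - 2).choose (i - 1) : ℤ[X]) * P i * P (n + 1 - i)

namespace KeelRecursion

variable {P : ℕ → ℤ[X]}

lemma apply_add_four (hrec : KeelRecursion P) (k : ℕ) :
    P (k + 4) = P (k + 3) * (1 + X) +
      X * ∑ j ∈ range k, ((k + 2).choose (j + 2) : ℤ[X]) * (P (j + 3) * P (k + 2 - j)) := by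
  rw [hrec (k + 4) (by omega), ← Ico_add_one_right_eq_Icc, sum_Ico_eq_sum_range,
    show k + 4 - 1 = k + 3 by omega, show k + 4 - 2 = k + 2 by omega,
    show k + 2 + 1 - 3 = k by omega]
  congr 2
  refine sum_congr rfl fun j _ => ?_
  rw [show 3 + j - 1 = j + 2 by omega, show k + 4 + 1 - (3 + j) = k + 2 - j by omega,
    add_comm 3 j, mul_assoc]

lemma coeff_succ_apply_add_four (hrec : KeelRecursion P) (k d : ℕ) :
    (P (k + 4)).coeff (d + 1) = (P (k + 3)).coeff (d + 1) + (P (k + 3)).coeff d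
      + ∑ j ∈ range k,
          ((k + 2).choose (j + 2) : ℤ) * (P (j + 3) * P (k + 2 - j)).coeff d := by
  rw [hrec.apply_add_four k]
  simp only [mul_add, mul_one, add_assoc, coeff_add, coeff_mul_X, coeff_X_mul, finsetSum_coeff,
    coeff_natCast_mul]

lemma coeff_zero (h3 : P 3 = 1) (hrec : KeelRecursion P) {n : ℕ} (hn : 3 ≤ n) :
    (P n).coeff 0 = 1 := by
  obtain ⟨k, rfl⟩ : ∃ k, n = k + 3 := ⟨n - 3, by omega⟩
  clear hn
  induction k with
  | zero => simp [h3]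
  | succ k ih => simp [hrec.apply_add_four k, mul_coeff_zero, ih]

lemma coeff_one (h3 : P 3 = 1) (hrec : KeelRecursion P) {n : ℕ} (hn : 3 ≤ n) :
    ((P n).coeff 1 : ℚ) = keelCoeffOne n := by
  obtain ⟨k, rfl⟩ : ∃ k, n = k + 3 := ⟨n - 3, by omega⟩
  clear hn
  induction k with
  | zero => norm_num [h3, keelCoeffOne, Polynomial.coeff_one]
  | succ k ih =>
    have hsum :
        ∑ j ∈ range k, ((k + 2).choose (j + 2) : ℤ) * (P (j + 3) * P (k + 2 - j)).coeff 0
          = ∑ j ∈ range k, ((k + 2).choose (j + 2) : ℤ) * 1 := by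
      refine sum_congr rfl fun j hj => ?_
      have hj := mem_range.mp hj
      rw [mul_coeff_zero, hrec.coeff_zero h3 (by omega), hrec.coeff_zero h3 (by omega), mul_one]
    have hstep : ((P (k + 4)).coeff 1 : ℚ)
        = (P (k + 3)).coeff 1 + 1 + ∑ j ∈ range k, ((k + 2).choose (j + 2) : ℚ) * 1 := by
      have h := hrec.coeff_succ_apply_add_four k 0
      rw [hsum, hrec.coeff_zero h3 (by omega)] at h
      exact_mod_cast h
    have hfull : ∑ l ∈ range (k + 3), ((k + 2).choose l : ℚ) * 1 = 2 ^ (k + 2) := by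
      simpa using (Nat.cast_inj (R := ℚ)).mpr (Nat.sum_range_choose (k + 2))
    rw [show k + 1 + 3 = k + 4 by omega, hstep, ih, sum_range_choose_add_two_mul k (fun _ => 1),
      hfull]
    simp only [keelCoeffOne]
    push_cast
    ring

lemma coeff_two (h3 : P 3 = 1) (hrec : KeelRecursion P) {n : ℕ} (hn : 3 ≤ n) :
    ((P n).coeff 2 : ℚ) = keelCoeffTwo n := by
  obtain ⟨k, rfl⟩ : ∃ k, n = k + 3 := ⟨n - 3, by omega⟩
  clear hn
  induction k with
  | zero => norm_num [h3, keelCoeffTwo, Polynomial.coeff_one]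
  | succ k ih =>
    set g : ℕ → ℚ := fun l => keelCoeffOne (l + 1) + keelCoeffOne (k + 2 - l + 2) with hg
    have hsum : ∑ j ∈ range k,
        ((((k + 2).choose (j + 2) : ℤ) * (P (j + 3) * P (k + 2 - j)).coeff 1 : ℤ) : ℚ)
          = ∑ j ∈ range k, ((k + 2).choose (j + 2) : ℚ) * g (j + 2) := by
      refine sum_congr rfl fun j hj => ?_
      have hj := mem_range.mp hj
      rw [coeff_one_mul_of_coeff_zero_eq_one (hrec.coeff_zero h3 (by omega))
        (hrec.coeff_zero h3 (by omega))]
      push_cast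
      simp only [hg]
      rw [hrec.coeff_one h3 (by omega), hrec.coeff_one h3 (by omega),
        show k + 2 - (j + 2) + 2 = k + 2 - j by omega]
    have hfull : ∑ l ∈ range (k + 3), ((k + 2).choose l : ℚ) * g l
        = ∑ l ∈ range (k + 3), ((k + 2).choose l : ℚ) * keelCoeffOne (l + 1)
          + ∑ l ∈ range (k + 3), ((k + 2).choose l : ℚ) * keelCoeffOne (l + 2) := by
      rw [← sum_range_choose_mul_reflect (k + 2) (fun l => keelCoeffOne (l + 2)),
        ← sum_add_distrib]
      exact sum_congr rfl fun l _ => mul_add _ _ _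
    have hstep := congrArg (fun z : ℤ => (z : ℚ)) (hrec.coeff_succ_apply_add_four k 1)
    simp only [Int.cast_add, Int.cast_sum] at hstep
    rw [show k + 1 + 3 = k + 4 by omega, hstep, hsum, ih, hrec.coeff_one h3 (by omega),
      sum_range_choose_add_two_mul, hfull, sum_range_choose_mul_keelCoeffOne_add_one,
      sum_range_choose_mul_keelCoeffOne_add_two]
    simp only [hg, keelCoeffOne, keelCoeffTwo, Nat.sub_zero, Nat.sub_self,
      show k + 2 - 1 = k + 1 by omega]
    push_cast
    ring

end KeelRecursion

theorem stmt13 (P : ℕ → Polynomial ℤ)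
    (h3 : P 3 = 1)
    (hrec : ∀ n, 3 < n → P n = P (n-1) * (1 + X) +
      X * ∑ i ∈ Finset.Icc 3 (n-2), ((n-2).choose (i-1) : Polynomial ℤ) * P i * P (n+1-i)) :
    ∀ n : ℕ, 3 ≤ n →
      ((P n).coeff 2 : ℚ) = (1/2) * 3 ^ n - (((n : ℚ)^2 + 3*n + 4) / 8) * 2 ^ n
        + (3*(n : ℚ)^4 - 10*n^3 + 33*n^2 - 26*n + 12) / 24 :=
  fun _ hn => KeelRecursion.coeff_two h3 hrec hn
end

section
/- For all k ≥ 1, given sequences a_{n,i} (i = k-1, k, k+1; n ≥ 3) of positive reals such that a_{n,i}·(i+1)!/(i+1)^{i+n-1} → 1 as n → ∞ for each i ∈ {k-1, k, k+1}, there exists N such that for all n ≥ N, (a_{n,k}/C(n-3,k))^2 ≥ (a_{n,k-1}/C(n-3,k-1))·(a_{n,k+1}/C(n-3,k+1)). -/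
/-!
Write `g i n = (i+1)^(i+n-1)/(i+1)!` for the leading term of `a n i`. Since `a n i ~ g i n`, the
ratio `a n k ^ 2 / (a n (k-1) * a n (k+1))` is asymptotic to
`g k n ^ 2 / (g (k-1) n * g (k+1) n)`, a constant times `((k+1)^2 / (k (k+2)))^n`, which tends to
infinity. The binomial coefficients only cost a bounded factor:
`C(m,k)^2 / (C(m,k-1) C(m,k+1)) = (k+1)(m-k+1) / (k(m-k)) ≤ 4`.
-/

open Filter Asymptotics Topology

theorem Nat.choose_sq_le_four_mul {m k : ℕ} (hk : 1 ≤ k) (hkm : k + 1 ≤ m) :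
    m.choose k ^ 2 ≤ 4 * (m.choose (k - 1) * m.choose (k + 1)) := by
  obtain ⟨i, rfl⟩ := Nat.exists_eq_add_of_le' hk
  obtain ⟨j, rfl⟩ := Nat.exists_eq_add_of_le hkm
  have h₁ := Nat.choose_succ_right_eq (i + 1 + 1 + j) i
  have h₂ := Nat.choose_succ_right_eq (i + 1 + 1 + j) (i + 1)
  rw [show i + 1 + 1 + j - i = j + 2 by omega] at h₁
  rw [show i + 1 + 1 + j - (i + 1) = j + 1 by omega] at h₂
  rw [Nat.add_sub_cancel]
  set c₀ := (i + 1 + 1 + j).choose i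
  set c₁ := (i + 1 + 1 + j).choose (i + 1)
  set c₂ := (i + 1 + 1 + j).choose (i + 1 + 1)
  refine Nat.le_of_mul_le_mul_right (c := (i + 1) * (j + 1)) ?_ (by positivity)
  calc c₁ ^ 2 * ((i + 1) * (j + 1))
      = (c₁ * (i + 1)) * (c₁ * (j + 1)) := by ring
    _ = c₀ * c₂ * ((j + 2) * (i + 1 + 1)) := by rw [h₁, ← h₂]; ring
    _ ≤ c₀ * c₂ * (4 * ((i + 1) * (j + 1))) := Nat.mul_le_mul_left _ (by nlinarith)
    _ = 4 * (c₀ * c₂) * ((i + 1) * (j + 1)) := by ring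

theorem div_mul_div_le_div_sq {p q r c₀ c₁ c₂ : ℝ} (hpr : 0 < p * r) (hc₀ : 0 < c₀)
    (hc₁ : 0 < c₁) (hc₂ : 0 < c₂) (hc : c₁ ^ 2 ≤ 4 * (c₀ * c₂)) (h : 4 ≤ q ^ 2 / (p * r)) :
    p / c₀ * (r / c₂) ≤ (q / c₁) ^ 2 := by
  rw [le_div_iff₀ hpr] at h
  rw [div_mul_div_comm, div_pow, div_le_div_iff₀ (by positivity) (by positivity)]
  nlinarith [mul_le_mul_of_nonneg_left hc hpr.le]

theorem Asymptotics.isEquivalent_of_tendsto_mul_div {α : Type*} {l : Filter α} {u d : α → ℝ}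
    {c : ℝ} (h : Tendsto (fun x => u x * c / d x) l (𝓝 1)) : u ~[l] fun x => d x / c :=
  isEquivalent_of_tendsto_one (h.congr fun _ => (div_div_eq_mul_div _ _ _).symm)

theorem tendsto_sq_div_mul_geom_atTop {x y z A B C : ℝ} (hx : 0 < x) (hz : 0 < z) (hA : 0 < A)
    (hB : B ≠ 0) (hC : 0 < C) (h : x * z < y ^ 2) :
    Tendsto (fun n : ℕ => (y ^ n * B) ^ 2 / (x ^ n * A * (z ^ n * C))) atTop atTop := by
  have hq : 1 < y ^ 2 / (x * z) := (one_lt_div (by positivity)).2 h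
  refine ((tendsto_pow_atTop_atTop_of_one_lt hq).const_mul_atTop
    (by positivity : 0 < B ^ 2 / (A * C))).congr fun n => ?_
  rw [div_pow, mul_pow, mul_pow, ← pow_mul, ← pow_mul, mul_comm 2 n, pow_mul]
  field_simp

noncomputable def leadingTerm (i n : ℕ) : ℝ :=
  ((i : ℝ) + 1) ^ (i + n - 1) / (i + 1).factorial

theorem leadingTerm_add_one (i n : ℕ) :
    leadingTerm i (n + 1) = ((i : ℝ) + 1) ^ n * (((i : ℝ) + 1) ^ i / (i + 1).factorial) := by
  simp only [leadingTerm, show i + (n + 1) - 1 = n + i by omega, pow_add]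
  ring

theorem tendsto_leadingTerm_ratio_atTop {k : ℕ} (hk : 1 ≤ k) :
    Tendsto (fun n => leadingTerm k n ^ 2 / (leadingTerm (k - 1) n * leadingTerm (k + 1) n))
      atTop atTop := by
  obtain ⟨j, rfl⟩ := Nat.exists_eq_add_of_le' hk
  rw [← tendsto_add_atTop_iff_nat 1]
  simp only [leadingTerm_add_one, Nat.add_sub_cancel]
  refine tendsto_sq_div_mul_geom_atTop (by positivity) (by positivity) (by positivity)
    (by positivity) (by positivity) ?_
  push_cast
  nlinarith

theorem stmt18 (k : ℕ) (hk : 1 ≤ k) (a : ℕ → ℕ → ℝ)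
    (hpos : ∀ i ∈ ({k - 1, k, k + 1} : Set ℕ), ∀ n, 3 ≤ n → 0 < a n i)
    (hlim : ∀ i ∈ ({k - 1, k, k + 1} : Set ℕ),
      Tendsto (fun n : ℕ =>
        a n i * (Nat.factorial (i + 1)) / ((i : ℝ) + 1) ^ (i + n - 1)) atTop (nhds 1)) :
    ∃ N : ℕ, ∀ n, N ≤ n →
      (a n k / (Nat.choose (n - 3) k)) ^ 2 ≥
        (a n (k - 1) / (Nat.choose (n - 3) (k - 1)))
          * (a n (k + 1) / (Nat.choose (n - 3) (k + 1))) := by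
  have hequiv (i) (hi : i ∈ ({k - 1, k, k + 1} : Set ℕ)) :
      (fun n => a n i) ~[atTop] leadingTerm i :=
    isEquivalent_of_tendsto_mul_div (hlim i hi)
  have hratio : Tendsto (fun n => a n k ^ 2 / (a n (k - 1) * a n (k + 1))) atTop atTop :=
    (((hequiv k (by simp)).pow 2).div ((hequiv (k - 1) (by simp)).mul
      (hequiv (k + 1) (by simp)))).symm.tendsto_atTop (tendsto_leadingTerm_ratio_atTop hk)
  obtain ⟨N, hN⟩ := eventually_atTop.1 (hratio.eventually_ge_atTop 4)
  refine ⟨max N (k + 4), fun n hn => ?_⟩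
  have hn3 : 3 ≤ n := by omega
  have hchoose := Nat.choose_sq_le_four_mul (m := n - 3) hk (by omega)
  exact div_mul_div_le_div_sq
    (mul_pos (hpos _ (by simp) n hn3) (hpos _ (by simp) n hn3))
    (by exact_mod_cast Nat.choose_pos (by omega)) (by exact_mod_cast Nat.choose_pos (by omega))
    (by exact_mod_cast Nat.choose_pos (by omega)) (by exact_mod_cast hchoose) (hN n (by omega))
end
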